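/- arXiv:2407.11363 — 2 statements merged into one kernel-verified Lean document; each statement's English description precedes it below -/
import Mathlib

section
/- Let m, n ≥ 2 and consider the quiver Q on vertex set {(a,b) : 1 ≤ a ≤ n, 1 ≤ b ≤ m} (indices taken cyclically) with arrows (a,b) → (a+1,b) and (a,b) → (a,b+1). Then the separated quiver of Q contains, as a full subquiver, a cycle with zigzag orientation on 2·lcm(m,n) vertices; in particular the underlying graph of the separated quiver contains a cycle of length 2·lcm(m,n). -/
/-- Vertices of the separated quiver: `Sum.inl v = v⁺` and `Sum.inr v = v⁻`. -/
def SepQ (V : Type) : Type := V ⊕ V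

/-- The separated quiver has an arrow `v⁺ → w⁻` for each arrow `v → w`. -/
instance SepQ.quiver (V : Type) [Quiver.{0} V] : Quiver.{0} (SepQ V) :=
  ⟨fun a b =>
    match a, b with
    | Sum.inl i, Sum.inr j => (i ⟶ j)
    | _, _ => Empty⟩

/-- The underlying undirected (simple) graph of a quiver. -/
def underlyingGraph (V : Type) [Quiver.{0} V] : SimpleGraph V :=
  SimpleGraph.fromRel (fun a b => Nonempty (a ⟶ b))

/-- The quiver `Q` on `ℤ/n × ℤ/m` with arrows `(a,b) → (a+1,b)` and `(a,b) → (a,b+1)`. -/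
instance torusQuiver (n m : ℕ) : Quiver.{0} (ZMod n × ZMod m) :=
  ⟨fun v w => PLift (w = (v.1 + 1, v.2) ∨ w = (v.1, v.2 + 1))⟩

namespace Stmt10Aux

variable (n m : ℕ)

abbrev V' := ZMod n × ZMod m

def d : V' n m := (1, -1)

abbrev G : SimpleGraph (SepQ (V' n m)) := underlyingGraph (SepQ (V' n m))

def p (k : ℕ) : SepQ (V' n m) := Sum.inl (k • d n m)
def q (k : ℕ) : SepQ (V' n m) := Sum.inr (k • d n m + (1, 0))

lemma adj_pq (k : ℕ) : (G n m).Adj (p n m k) (q n m k) := by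
  constructor
  · simp [p, q]; exact Sum.inl_ne_inr
  · left
    exact ⟨PLift.up (Or.inl (by simp [d, Prod.ext_iff]))⟩

lemma adj_qp (k : ℕ) : (G n m).Adj (q n m k) (p n m (k + 1)) := by
  constructor
  · simp [p, q]; exact Sum.inr_ne_inl
  · right
    refine ⟨PLift.up (Or.inr ?_)⟩
    simp [d, Prod.ext_iff, add_nsmul]

def zig : (k : ℕ) → (G n m).Walk (p n m k) (p n m 0)
  | 0 => .nil
  | (k + 1) => .cons (adj_qp n m k).symm (.cons (adj_pq n m k).symm (zig k))

lemma zig_length (k : ℕ) : (zig n m k).length = 2 * k := by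
  induction k with
  | zero => rfl
  | succ k ih => simp [zig, ih]; omega

lemma mem_support_zig {x : SepQ (V' n m)} {k : ℕ} :
    x ∈ (zig n m k).support ↔ (∃ j ≤ k, x = p n m j) ∨ ∃ j < k, x = q n m j := by
  induction k with
  | zero =>
    simp only [zig, SimpleGraph.Walk.support_nil, List.mem_singleton]
    constructor
    · rintro rfl; exact Or.inl ⟨0, le_refl 0, rfl⟩
    · rintro (⟨j, hj, rfl⟩ | ⟨j, hj, rfl⟩)
      · rw [Nat.le_zero.mp hj]
      · omega
  | succ k ih =>
    simp only [zig, SimpleGraph.Walk.support_cons, List.mem_cons, ih]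
    constructor
    · rintro (rfl | rfl | ⟨j, hj, rfl⟩ | ⟨j, hj, rfl⟩)
      · exact Or.inl ⟨k + 1, le_refl _, rfl⟩
      · exact Or.inr ⟨k, by omega, rfl⟩
      · exact Or.inl ⟨j, by omega, rfl⟩
      · exact Or.inr ⟨j, by omega, rfl⟩
    · rintro (⟨j, hj, rfl⟩ | ⟨j, hj, rfl⟩)
      · rcases Nat.lt_or_ge j (k + 1) with h | h
        · exact Or.inr (Or.inr (Or.inl ⟨j, by omega, rfl⟩))
        · exact Or.inl (by rw [show j = k + 1 by omega])
      · rcases Nat.lt_or_ge j k with h | h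
        · exact Or.inr (Or.inr (Or.inr ⟨j, h, rfl⟩))
        · exact Or.inr (Or.inl (by rw [show j = k by omega]))

end Stmt10Aux

namespace Stmt10Aux

variable (n m : ℕ)

lemma addOrderOf_d (hn : 2 ≤ n) (hm : 2 ≤ m) : addOrderOf (d n m) = Nat.lcm n m := by
  have h2 : addOrderOf ((-1 : ZMod m)) = m := by
    rw [addOrderOf_neg, ZMod.addOrderOf_one]
  rw [d, Prod.addOrderOf, ZMod.addOrderOf_one, h2]

lemma p_inj (hn : 2 ≤ n) (hm : 2 ≤ m) {j j' : ℕ} (hj : j < Nat.lcm n m)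
    (hj' : j' < Nat.lcm n m) (h : p n m j = p n m j') : j = j' := by
  have := Sum.inl.inj h
  exact nsmul_injOn_Iio_addOrderOf (by rwa [addOrderOf_d n m hn hm])
    (by rwa [addOrderOf_d n m hn hm]) this

lemma q_inj (hn : 2 ≤ n) (hm : 2 ≤ m) {j j' : ℕ} (hj : j < Nat.lcm n m)
    (hj' : j' < Nat.lcm n m) (h : q n m j = q n m j') : j = j' := by
  have h2 : j • d n m = j' • d n m := add_right_cancel (Sum.inr.inj h)
  exact nsmul_injOn_Iio_addOrderOf (by rwa [addOrderOf_d n m hn hm])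
    (by rwa [addOrderOf_d n m hn hm]) h2

lemma support_nodup (hn : 2 ≤ n) (hm : 2 ≤ m) (k : ℕ) (hk : k < Nat.lcm n m) :
    (zig n m k).support.Nodup := by
  induction k with
  | zero => simp [zig]
  | succ k ih =>
    have hk' : k < Nat.lcm n m := by omega
    simp only [zig, SimpleGraph.Walk.support_cons, List.nodup_cons]
    refine ⟨?_, ?_, ih hk'⟩
    · intro h
      rcases List.mem_cons.mp h with h | h
      · exact absurd h (by simp [p, q])
      · rcases (mem_support_zig n m).mp h with ⟨j, hj, hpj⟩ | ⟨j, hj, hpj⟩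
        · have := p_inj n m hn hm hk (by omega) hpj
          omega
        · exact absurd hpj (by simp [p, q])
    · intro h
      rcases (mem_support_zig n m).mp h with ⟨j, hj, hpj⟩ | ⟨j, hj, hpj⟩
      · exact absurd hpj (by simp [p, q])
      · have := q_inj n m hn hm hk' (by omega) hpj
        omega

lemma mem_edges_zig {e : Sym2 (SepQ (V' n m))} {k : ℕ} (he : e ∈ (zig n m k).edges) :
    ∃ j < k, e = s(p n m (j + 1), q n m j) ∨ e = s(q n m j, p n m j) := by
  induction k with
  | zero => simp [zig] at he
  | succ k ih =>
    simp only [zig, SimpleGraph.Walk.edges_cons, List.mem_cons] at he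
    rcases he with rfl | rfl | he
    · exact ⟨k, by omega, Or.inl rfl⟩
    · exact ⟨k, by omega, Or.inr rfl⟩
    · obtain ⟨j, hj, h⟩ := ih he
      exact ⟨j, by omega, h⟩

end Stmt10Aux

open Stmt10Aux

/-- for `m, n ≥ 2`, every arrow of the separated quiver of `Q` goes from a
`+` vertex to a `−` vertex (zigzag orientation), and the underlying graph of the separated
quiver contains a cycle of length `2·lcm(m,n)`. -/
theorem stmt_10 (n m : ℕ) (hn : 2 ≤ n) (hm : 2 ≤ m) :
    (∀ a b : SepQ (ZMod n × ZMod m), (a ⟶ b) →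
        ∃ x y : ZMod n × ZMod m, a = Sum.inl x ∧ b = Sum.inr y) ∧
      (∃ (v : SepQ (ZMod n × ZMod m))
          (w : (underlyingGraph (SepQ (ZMod n × ZMod m))).Walk v v),
        w.IsCycle ∧ w.length = 2 * Nat.lcm m n) := by
  constructor
  · rintro (a | a) (b | b) f
    · exact f.elim
    · exact ⟨a, b, rfl, rfl⟩
    · exact f.elim
    · exact f.elim
  · have hL0 : Nat.lcm m n ≠ 0 := Nat.lcm_ne_zero (by omega) (by omega)
    have hL2 : 2 ≤ Nat.lcm m n :=
      le_trans hm (Nat.le_of_dvd (Nat.pos_of_ne_zero hL0) (Nat.dvd_lcm_left m n))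
    obtain ⟨K, hK⟩ : ∃ K, Nat.lcm m n = K + 1 := ⟨Nat.lcm m n - 1, by omega⟩
    have hKlt : K < Nat.lcm n m := by rw [Nat.lcm_comm]; omega
    have hzero : (K + 1) • d n m = 0 := by
      apply addOrderOf_dvd_iff_nsmul_eq_zero.mp
      rw [addOrderOf_d n m hn hm, Nat.lcm_comm, hK]
    have hp : p n m (K + 1) = p n m 0 := by
      simp [p, hzero]; rfl
    refine ⟨p n m 0, ((zig n m (K + 1)).copy hp rfl), ?_, ?_⟩
    · show (((zig n m K).cons _ |>.cons _).copy hp rfl).IsCycle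
      rw [SimpleGraph.Walk.copy_cons, SimpleGraph.Walk.copy_rfl_rfl,
        SimpleGraph.Walk.cons_isCycle_iff]
      constructor
      · rw [SimpleGraph.Walk.isPath_def, SimpleGraph.Walk.support_cons, List.nodup_cons]
        refine ⟨?_, support_nodup n m hn hm K hKlt⟩
        intro h
        rcases (mem_support_zig n m).mp h with ⟨j, hj, hpj⟩ | ⟨j, hj, hpj⟩
        · exact absurd hpj (by simp [p, q])
        · have := q_inj n m hn hm hKlt (by omega) hpj
          omega
      · intro h
        simp only [SimpleGraph.Walk.edges_cons, List.mem_cons] at h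
        rcases h with h | h
        · rw [Sym2.eq_iff] at h
          rcases h with ⟨h1, h2⟩ | ⟨h1, h2⟩
          · exact absurd h1 (by simp [p, q])
          · have := p_inj n m hn hm (by omega) hKlt h1
            omega
        · obtain ⟨j, hj, h⟩ := mem_edges_zig n m h
          rcases h with h | h <;> rw [Sym2.eq_iff] at h <;>
            rcases h with ⟨h1, h2⟩ | ⟨h1, h2⟩
          · have := q_inj n m hn hm hKlt (by omega) h2
            omega
          · exact absurd h1 (by simp [p, q])
          · exact absurd h1 (by simp [p, q])
          · have := q_inj n m hn hm hKlt (by omega) h2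
            omega
    · rw [SimpleGraph.Walk.length_copy, zig_length]
      omega
end

section
/- Let A = kQ_A/I_A and B = kQ_B/I_B be bound quiver algebras over a field k. Then the tensor product algebra A ⊗_k B is isomorphic to the bound quiver algebra k(Q_A ⊗ Q_B)/(I_A ◇ I_B). -/
open FreeAlgebra
open scoped TensorProduct

/-- The generators of the path algebra of a quiver: vertices and arrows. -/
abbrev QGen (V : Type) [Quiver.{0} V] : Type := V ⊕ (Σ a : V, Σ b : V, a ⟶ b)

/-- The defining relations of the path algebra `kQ`, presented as a quotient of the free
algebra on the vertices (orthogonal idempotents summing to `1`) and the arrows. -/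
inductive PathRel (k : Type) [CommRing k] (V : Type) [Quiver.{0} V] [Fintype V] [DecidableEq V] :
    FreeAlgebra k (QGen V) → FreeAlgebra k (QGen V) → Prop
  | vertex (a b : V) : PathRel k V (ι k (Sum.inl a) * ι k (Sum.inl b))
      (if a = b then ι k (Sum.inl a) else 0)
  | vsum : PathRel k V (∑ a : V, ι k (Sum.inl a)) 1
  | left (p : Σ a : V, Σ b : V, a ⟶ b) :
      PathRel k V (ι k (Sum.inl p.1) * ι k (Sum.inr p)) (ι k (Sum.inr p))
  | right (p : Σ a : V, Σ b : V, a ⟶ b) :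
      PathRel k V (ι k (Sum.inr p) * ι k (Sum.inl p.2.1)) (ι k (Sum.inr p))

/-- The tensor product of two quivers. -/
def TensQ (V W : Type) : Type := V × W

instance TensQ.quiver (V W : Type) [Quiver.{0} V] [Quiver.{0} W] : Quiver.{0} (TensQ V W) :=
  ⟨fun a b => {_f : a.1 ⟶ b.1 // a.2 = b.2} ⊕ {_g : a.2 ⟶ b.2 // a.1 = b.1}⟩

instance TensQ.fintype (V W : Type) [Fintype V] [Fintype W] : Fintype (TensQ V W) :=
  instFintypeProd V W

instance TensQ.decidableEq (V W : Type) [DecidableEq V] [DecidableEq W] :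
    DecidableEq (TensQ V W) := instDecidableEqProd

section

variable (k : Type) [Field k]
variable (VA VB : Type) [Quiver.{0} VA] [Quiver.{0} VB]
  [Fintype VA] [Fintype VB] [DecidableEq VA] [DecidableEq VB]

/-- The arrow `α × j` of the tensor quiver, for an arrow `α` of `Q_A` and a vertex `j`. -/
def tArrL (p : Σ a : VA, Σ b : VA, a ⟶ b) (j : VB) :
    Σ x : TensQ VA VB, Σ y : TensQ VA VB, x ⟶ y :=
  ⟨(p.1, j), (p.2.1, j), Sum.inl ⟨p.2.2, rfl⟩⟩

/-- The arrow `i × β` of the tensor quiver, for a vertex `i` and an arrow `β` of `Q_B`. -/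
def tArrR (q : Σ s : VB, Σ t : VB, s ⟶ t) (i : VA) :
    Σ x : TensQ VA VB, Σ y : TensQ VA VB, x ⟶ y :=
  ⟨(i, q.1), (i, q.2.1), Sum.inr ⟨q.2.2, rfl⟩⟩

/-- The canonical algebra map `kQ_A → k(Q_A ⊗ Q_B)`, sending a vertex `a` to
`∑_j e_{(a,j)}` and an arrow `α` to `∑_j (α × j)` (at the level of free algebras). -/
def psiA : FreeAlgebra k (QGen VA) →ₐ[k] FreeAlgebra k (QGen (TensQ VA VB)) :=
  FreeAlgebra.lift k fun g =>
    match g with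
    | Sum.inl a => ∑ j : VB, ι k (Sum.inl ((a, j) : TensQ VA VB))
    | Sum.inr p => ∑ j : VB, ι k (Sum.inr (tArrL VA VB p j))

/-- The canonical algebra map `kQ_B → k(Q_A ⊗ Q_B)`. -/
def psiB : FreeAlgebra k (QGen VB) →ₐ[k] FreeAlgebra k (QGen (TensQ VA VB)) :=
  FreeAlgebra.lift k fun g =>
    match g with
    | Sum.inl s => ∑ i : VA, ι k (Sum.inl ((i, s) : TensQ VA VB))
    | Sum.inr q => ∑ i : VA, ι k (Sum.inr (tArrR VA VB q i))

variable (SA : Set (FreeAlgebra k (QGen VA))) (SB : Set (FreeAlgebra k (QGen VB)))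

/-- The relations presenting the bound quiver algebra `A = kQ_A/I_A`, where `I_A` is the
ideal generated by the set of relations `S_A`. -/
def BoundRel : FreeAlgebra k (QGen VA) → FreeAlgebra k (QGen VA) → Prop :=
  fun x y => PathRel k VA x y ∨ (x ∈ SA ∧ y = 0)

/-- The relations presenting `k(Q_A ⊗ Q_B)/(I_A ◇ I_B)`: the path algebra relations of the
tensor quiver, the images of the relations of `A` and of `B`, and the commutativity
relations `(i,β)(α,t) = (α,s)(j,β)`. -/
def DiamondRel :
    FreeAlgebra k (QGen (TensQ VA VB)) → FreeAlgebra k (QGen (TensQ VA VB)) → Prop :=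
  fun x y => PathRel k (TensQ VA VB) x y ∨
    (∃ s ∈ SA, x = psiA k VA VB s ∧ y = 0) ∨
    (∃ s ∈ SB, x = psiB k VA VB s ∧ y = 0) ∨
    (∃ (p : Σ a : VA, Σ b : VA, a ⟶ b) (q : Σ s : VB, Σ t : VB, s ⟶ t),
      x = ι k (Sum.inr (tArrR VA VB q p.1)) * ι k (Sum.inr (tArrL VA VB p q.2.1)) ∧
      y = ι k (Sum.inr (tArrL VA VB p q.1)) * ι k (Sum.inr (tArrR VA VB q p.2.1)))

/-- The arrow ideal (as a `k`-submodule, two-sided by construction) of the path algebra. -/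
def arrowIdeal (V : Type) [Quiver.{0} V] [Fintype V] [DecidableEq V] :
    Submodule k (RingQuot (PathRel k V)) :=
  Submodule.span k {y | ∃ (p : Σ a : V, Σ b : V, a ⟶ b) (u v : RingQuot (PathRel k V)),
    y = u * RingQuot.mkAlgHom k (PathRel k V) (ι k (Sum.inr p)) * v}

/-- The two-sided ideal of the path algebra generated by a set `S` of relations, as a
`k`-submodule. -/
def relIdeal (V : Type) [Quiver.{0} V] [Fintype V] [DecidableEq V]
    (S : Set (FreeAlgebra k (QGen V))) : Submodule k (RingQuot (PathRel k V)) :=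
  Submodule.span k {y | ∃ x ∈ S, ∃ u v : RingQuot (PathRel k V),
    y = u * RingQuot.mkAlgHom k (PathRel k V) x * v}

/-- Admissibility of the ideal generated by `S`: it sits inside the square of the arrow
ideal and contains some power of it. -/
def Admissible (V : Type) [Quiver.{0} V] [Fintype V] [DecidableEq V]
    (S : Set (FreeAlgebra k (QGen V))) : Prop :=
  (∀ x ∈ S, RingQuot.mkAlgHom k (PathRel k V) x ∈ arrowIdeal k V * arrowIdeal k V) ∧
    ∃ m : ℕ, 2 ≤ m ∧ arrowIdeal k V ^ m ≤ relIdeal k V S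

section PathLemmas

variable {K : Type} [Field K] {V : Type} [Quiver.{0} V] [Fintype V] [DecidableEq V]
variable {R : FreeAlgebra K (QGen V) → FreeAlgebra K (QGen V) → Prop}
variable (hR : ∀ ⦃x y⦄, PathRel K V x y → R x y)

local notation "M" => RingQuot.mkAlgHom K R

include hR

lemma pe_mul_pe (a b : V) :
    M (ι K (Sum.inl a)) * M (ι K (Sum.inl b)) =
      if a = b then M (ι K (Sum.inl a)) else 0 := by
  rw [← map_mul, RingQuot.mkAlgHom_rel K (hR (PathRel.vertex a b))]
  by_cases h : a = b <;> simp [h]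

lemma pe_sum : ∑ a : V, M (ι K (Sum.inl a)) = 1 := by
  rw [← map_sum, RingQuot.mkAlgHom_rel K (hR PathRel.vsum), map_one]

lemma pe_mul_px_src (p : Σ a : V, Σ b : V, a ⟶ b) :
    M (ι K (Sum.inl p.1)) * M (ι K (Sum.inr p)) = M (ι K (Sum.inr p)) := by
  rw [← map_mul, RingQuot.mkAlgHom_rel K (hR (PathRel.left p))]

lemma px_mul_pe_tgt (p : Σ a : V, Σ b : V, a ⟶ b) :
    M (ι K (Sum.inr p)) * M (ι K (Sum.inl p.2.1)) = M (ι K (Sum.inr p)) := by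
  rw [← map_mul, RingQuot.mkAlgHom_rel K (hR (PathRel.right p))]

lemma pe_mul_px (a : V) (p : Σ a : V, Σ b : V, a ⟶ b) :
    M (ι K (Sum.inl a)) * M (ι K (Sum.inr p)) =
      if a = p.1 then M (ι K (Sum.inr p)) else 0 := by
  by_cases h : a = p.1
  · rw [if_pos h, h, pe_mul_px_src hR]
  · rw [if_neg h, ← pe_mul_px_src hR p, ← mul_assoc, pe_mul_pe hR, if_neg h, zero_mul]

lemma px_mul_pe (a : V) (p : Σ a : V, Σ b : V, a ⟶ b) :
    M (ι K (Sum.inr p)) * M (ι K (Sum.inl a)) =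
      if a = p.2.1 then M (ι K (Sum.inr p)) else 0 := by
  by_cases h : a = p.2.1
  · rw [if_pos h, h, px_mul_pe_tgt hR]
  · rw [if_neg h, ← px_mul_pe_tgt hR p, mul_assoc, pe_mul_pe hR, if_neg (fun hh => h hh.symm),
      mul_zero]

lemma px_mul_px (p q : Σ a : V, Σ b : V, a ⟶ b) (h : p.2.1 ≠ q.1) :
    M (ι K (Sum.inr p)) * M (ι K (Sum.inr q)) = 0 := by
  rw [← pe_mul_px_src hR q, ← mul_assoc, px_mul_pe hR, if_neg (fun hh => h hh.symm), zero_mul]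

end PathLemmas
section Main

variable {k : Type} [Field k]
variable {VA VB : Type} [Quiver.{0} VA] [Quiver.{0} VB]
  [Fintype VA] [Fintype VB] [DecidableEq VA] [DecidableEq VB]
variable {SA : Set (FreeAlgebra k (QGen VA))} {SB : Set (FreeAlgebra k (QGen VB))}

lemma hD_incl : ∀ ⦃x y⦄, PathRel k (TensQ VA VB) x y → DiamondRel k VA VB SA SB x y :=
  fun _ _ h => Or.inl h

lemma hA_incl : ∀ ⦃x y⦄, PathRel k VA x y → BoundRel k VA SA x y := fun _ _ h => Or.inl h
lemma hB_incl : ∀ ⦃x y⦄, PathRel k VB x y → BoundRel k VB SB x y := fun _ _ h => Or.inl h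

/-- vertex idempotent in the diamond quotient -/
noncomputable def ET (z : TensQ VA VB) : RingQuot (DiamondRel k VA VB SA SB) :=
  RingQuot.mkAlgHom k (DiamondRel k VA VB SA SB) (ι k (Sum.inl z))

/-- arrow element in the diamond quotient -/
noncomputable def XT (p : Σ x : TensQ VA VB, Σ y : TensQ VA VB, x ⟶ y) :
    RingQuot (DiamondRel k VA VB SA SB) :=
  RingQuot.mkAlgHom k (DiamondRel k VA VB SA SB) (ι k (Sum.inr p))

set_option linter.unusedSectionVars false

@[simp] lemma tArrL_src (p : Σ a : VA, Σ b : VA, a ⟶ b) (j : VB) :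
    (tArrL VA VB p j).1 = (p.1, j) := rfl
@[simp] lemma tArrL_tgt (p : Σ a : VA, Σ b : VA, a ⟶ b) (j : VB) :
    (tArrL VA VB p j).2.1 = (p.2.1, j) := rfl
@[simp] lemma tArrR_src (q : Σ s : VB, Σ t : VB, s ⟶ t) (i : VA) :
    (tArrR VA VB q i).1 = (i, q.1) := rfl
@[simp] lemma tArrR_tgt (q : Σ s : VB, Σ t : VB, s ⟶ t) (i : VA) :
    (tArrR VA VB q i).2.1 = (i, q.2.1) := rfl

@[simp] lemma TensQ.mk_injEq (a c : VA) (b d : VB) :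
    (@Eq (TensQ VA VB) (a, b) (c, d)) ↔ (a = c ∧ b = d) := by
  constructor
  · intro h
    exact ⟨congrArg Prod.fst h, congrArg Prod.snd h⟩
  · rintro ⟨rfl, rfl⟩
    rfl

section Sums

lemma ET_mul_ET (a b : VA) (i j : VB) :
    (ET (a, i) : RingQuot (DiamondRel k VA VB SA SB)) * ET (b, j) =
      if a = b ∧ i = j then ET (a, i) else 0 := by
  unfold ET
  erw [pe_mul_pe (hD_incl (k := k) (VA := VA) (VB := VB) (SA := SA) (SB := SB))]
  exact @if_congr _ _ _ (TensQ.decidableEq VA VB _ _) _ _ _ _ _ (TensQ.mk_injEq a b i j) rfl rfl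

lemma ET_mul_XTL (a : VA) (i : VB) (p : Σ a : VA, Σ b : VA, a ⟶ b) (j : VB) :
    (ET (a, i) : RingQuot (DiamondRel k VA VB SA SB)) * XT (tArrL VA VB p j) =
      if a = p.1 ∧ i = j then XT (tArrL VA VB p j) else 0 := by
  unfold ET XT
  erw [pe_mul_px (hD_incl (k := k) (VA := VA) (VB := VB) (SA := SA) (SB := SB))]
  exact @if_congr _ _ _ (TensQ.decidableEq VA VB _ _) _ _ _ _ _ (TensQ.mk_injEq a p.1 i j) rfl rfl

lemma ET_mul_XTR (a : VA) (i : VB) (q : Σ s : VB, Σ t : VB, s ⟶ t) (a' : VA) :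
    (ET (a, i) : RingQuot (DiamondRel k VA VB SA SB)) * XT (tArrR VA VB q a') =
      if a = a' ∧ i = q.1 then XT (tArrR VA VB q a') else 0 := by
  unfold ET XT
  erw [pe_mul_px (hD_incl (k := k) (VA := VA) (VB := VB) (SA := SA) (SB := SB))]
  exact @if_congr _ _ _ (TensQ.decidableEq VA VB _ _) _ _ _ _ _ (TensQ.mk_injEq a a' i q.1) rfl rfl

lemma XTL_mul_ET (a : VA) (i : VB) (p : Σ a : VA, Σ b : VA, a ⟶ b) (j : VB) :
    (XT (tArrL VA VB p j) : RingQuot (DiamondRel k VA VB SA SB)) * ET (a, i) =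
      if a = p.2.1 ∧ i = j then XT (tArrL VA VB p j) else 0 := by
  unfold ET XT
  erw [px_mul_pe (hD_incl (k := k) (VA := VA) (VB := VB) (SA := SA) (SB := SB))]
  exact @if_congr _ _ _ (TensQ.decidableEq VA VB _ _) _ _ _ _ _ (TensQ.mk_injEq a p.2.1 i j) rfl rfl

lemma XTR_mul_ET (a : VA) (i : VB) (q : Σ s : VB, Σ t : VB, s ⟶ t) (a' : VA) :
    (XT (tArrR VA VB q a') : RingQuot (DiamondRel k VA VB SA SB)) * ET (a, i) =
      if a = a' ∧ i = q.2.1 then XT (tArrR VA VB q a') else 0 := by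
  unfold ET XT
  erw [px_mul_pe (hD_incl (k := k) (VA := VA) (VB := VB) (SA := SA) (SB := SB))]
  exact @if_congr _ _ _ (TensQ.decidableEq VA VB _ _) _ _ _ _ _ (TensQ.mk_injEq a a' i q.2.1) rfl rfl

-- (a)
lemma La (a b : VA) :
    (∑ j : VB, (ET (a, j) : RingQuot (DiamondRel k VA VB SA SB))) * (∑ j : VB, ET (b, j)) =
      if a = b then ∑ j : VB, (ET (a, j) : RingQuot (DiamondRel k VA VB SA SB)) else 0 := by
  rw [Finset.sum_mul_sum]
  by_cases h : a = b <;>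
    simp [ET_mul_ET, h, TensQ.mk_injEq, ite_and, Finset.sum_ite_eq,
      Finset.sum_ite_eq']

lemma La' (s t : VB) :
    (∑ i : VA, (ET (i, s) : RingQuot (DiamondRel k VA VB SA SB))) * (∑ i : VA, ET (i, t)) =
      if s = t then ∑ i : VA, (ET (i, s) : RingQuot (DiamondRel k VA VB SA SB)) else 0 := by
  rw [Finset.sum_mul_sum]
  by_cases h : s = t <;>
    simp [ET_mul_ET, h, TensQ.mk_injEq, ite_and, Finset.sum_ite_eq,
      Finset.sum_ite_eq']

-- (b)
lemma Lb : ∑ a : VA, ∑ j : VB, (ET (a, j) : RingQuot (DiamondRel k VA VB SA SB)) = 1 := by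
  have h := Fintype.sum_prod_type
    (f := fun z : TensQ VA VB => (ET z : RingQuot (DiamondRel k VA VB SA SB)))
  rw [← h]
  exact pe_sum (V := TensQ VA VB) (hD_incl (k := k) (VA := VA) (VB := VB) (SA := SA) (SB := SB))

lemma Lb' : ∑ s : VB, ∑ i : VA, (ET (i, s) : RingQuot (DiamondRel k VA VB SA SB)) = 1 := by
  rw [Finset.sum_comm]
  exact Lb

-- (c)
lemma Lc (p : Σ a : VA, Σ b : VA, a ⟶ b) :
    (∑ j : VB, (ET (p.1, j) : RingQuot (DiamondRel k VA VB SA SB))) *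
      (∑ j : VB, XT (tArrL VA VB p j)) = ∑ j : VB, XT (tArrL VA VB p j) := by
  rw [Finset.sum_mul_sum]
  simp [ET_mul_XTL, ET_mul_XTR, TensQ.mk_injEq, ite_and, Finset.sum_ite_eq,
    Finset.sum_ite_eq']

lemma Lc' (q : Σ s : VB, Σ t : VB, s ⟶ t) :
    (∑ i : VA, (ET (i, q.1) : RingQuot (DiamondRel k VA VB SA SB))) *
      (∑ i : VA, XT (tArrR VA VB q i)) = ∑ i : VA, XT (tArrR VA VB q i) := by
  rw [Finset.sum_mul_sum]
  simp [ET_mul_XTL, ET_mul_XTR, TensQ.mk_injEq, ite_and, Finset.sum_ite_eq,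
    Finset.sum_ite_eq']

-- (d)
lemma Ld (p : Σ a : VA, Σ b : VA, a ⟶ b) :
    (∑ j : VB, (XT (tArrL VA VB p j) : RingQuot (DiamondRel k VA VB SA SB))) *
      (∑ j : VB, ET (p.2.1, j)) = ∑ j : VB, XT (tArrL VA VB p j) := by
  rw [Finset.sum_mul_sum]
  simp [XTL_mul_ET, XTR_mul_ET, TensQ.mk_injEq, ite_and, Finset.sum_ite_eq,
    Finset.sum_ite_eq']

lemma Ld' (q : Σ s : VB, Σ t : VB, s ⟶ t) :
    (∑ i : VA, (XT (tArrR VA VB q i) : RingQuot (DiamondRel k VA VB SA SB))) *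
      (∑ i : VA, ET (i, q.2.1)) = ∑ i : VA, XT (tArrR VA VB q i) := by
  rw [Finset.sum_mul_sum]
  simp [XTL_mul_ET, XTR_mul_ET, TensQ.mk_injEq, ite_and, Finset.sum_ite_eq,
    Finset.sum_ite_eq']

-- (e)
lemma Le (a : VA) (s : VB) :
    (∑ j : VB, (ET (a, j) : RingQuot (DiamondRel k VA VB SA SB))) * (∑ i : VA, ET (i, s)) =
      ET (a, s) := by
  rw [Finset.sum_mul_sum]
  simp [ET_mul_ET, TensQ.mk_injEq, ite_and, Finset.sum_ite_eq, Finset.sum_ite_eq']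

lemma Le' (a : VA) (s : VB) :
    (∑ i : VA, (ET (i, s) : RingQuot (DiamondRel k VA VB SA SB))) * (∑ j : VB, ET (a, j)) =
      ET (a, s) := by
  rw [Finset.sum_mul_sum]
  simp [ET_mul_ET, TensQ.mk_injEq, ite_and, Finset.sum_ite_eq, Finset.sum_ite_eq']

-- (f)
lemma Lf (a : VA) (q : Σ s : VB, Σ t : VB, s ⟶ t) :
    (∑ j : VB, (ET (a, j) : RingQuot (DiamondRel k VA VB SA SB))) *
      (∑ i : VA, XT (tArrR VA VB q i)) = XT (tArrR VA VB q a) := by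
  rw [Finset.sum_mul_sum]
  simp [ET_mul_XTL, ET_mul_XTR, TensQ.mk_injEq, ite_and, Finset.sum_ite_eq,
    Finset.sum_ite_eq']

lemma Lf' (a : VA) (q : Σ s : VB, Σ t : VB, s ⟶ t) :
    (∑ i : VA, (XT (tArrR VA VB q i) : RingQuot (DiamondRel k VA VB SA SB))) *
      (∑ j : VB, ET (a, j)) = XT (tArrR VA VB q a) := by
  rw [Finset.sum_mul_sum]
  simp [XTL_mul_ET, XTR_mul_ET, TensQ.mk_injEq, ite_and, Finset.sum_ite_eq,
    Finset.sum_ite_eq']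

-- (g)
lemma Lg (s : VB) (p : Σ a : VA, Σ b : VA, a ⟶ b) :
    (∑ i : VA, (ET (i, s) : RingQuot (DiamondRel k VA VB SA SB))) *
      (∑ j : VB, XT (tArrL VA VB p j)) = XT (tArrL VA VB p s) := by
  rw [Finset.sum_mul_sum]
  simp [ET_mul_XTL, ET_mul_XTR, TensQ.mk_injEq, ite_and, Finset.sum_ite_eq,
    Finset.sum_ite_eq']

lemma Lg' (s : VB) (p : Σ a : VA, Σ b : VA, a ⟶ b) :
    (∑ j : VB, (XT (tArrL VA VB p j) : RingQuot (DiamondRel k VA VB SA SB))) *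
      (∑ i : VA, ET (i, s)) = XT (tArrL VA VB p s) := by
  rw [Finset.sum_mul_sum]
  simp [XTL_mul_ET, XTR_mul_ET, TensQ.mk_injEq, ite_and, Finset.sum_ite_eq,
    Finset.sum_ite_eq']

-- (h)
lemma Lh (p : Σ a : VA, Σ b : VA, a ⟶ b) (q : Σ s : VB, Σ t : VB, s ⟶ t) :
    (∑ j : VB, (XT (tArrL VA VB p j) : RingQuot (DiamondRel k VA VB SA SB))) *
      (∑ i : VA, XT (tArrR VA VB q i)) =
      XT (tArrL VA VB p q.1) * XT (tArrR VA VB q p.2.1) := by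
  rw [Finset.sum_mul_sum]
  have hterm : ∀ (j : VB) (i : VA),
      (XT (tArrL VA VB p j) : RingQuot (DiamondRel k VA VB SA SB)) * XT (tArrR VA VB q i) =
      if j = q.1 ∧ i = p.2.1 then XT (tArrL VA VB p q.1) * XT (tArrR VA VB q p.2.1) else 0 := by
    intro j i
    by_cases h : j = q.1 ∧ i = p.2.1
    · rw [if_pos h, h.1, h.2]
    · rw [if_neg h]
      apply px_mul_px (hD_incl (k := k) (VA := VA) (VB := VB) (SA := SA) (SB := SB))
      intro hh
      obtain ⟨h1, h2⟩ := (TensQ.mk_injEq _ _ _ _).1 hh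
      exact h ⟨h2, h1.symm⟩
  rw [Finset.sum_congr rfl fun j _ => Finset.sum_congr rfl fun i _ => hterm j i]
  simp [ite_and, Finset.sum_ite_eq, Finset.sum_ite_eq']

lemma Lh' (p : Σ a : VA, Σ b : VA, a ⟶ b) (q : Σ s : VB, Σ t : VB, s ⟶ t) :
    (∑ i : VA, (XT (tArrR VA VB q i) : RingQuot (DiamondRel k VA VB SA SB))) *
      (∑ j : VB, XT (tArrL VA VB p j)) =
      XT (tArrR VA VB q p.1) * XT (tArrL VA VB p q.2.1) := by
  rw [Finset.sum_mul_sum]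
  have hterm : ∀ (i : VA) (j : VB),
      (XT (tArrR VA VB q i) : RingQuot (DiamondRel k VA VB SA SB)) * XT (tArrL VA VB p j) =
      if i = p.1 ∧ j = q.2.1 then XT (tArrR VA VB q p.1) * XT (tArrL VA VB p q.2.1) else 0 := by
    intro i j
    by_cases h : i = p.1 ∧ j = q.2.1
    · rw [if_pos h, h.1, h.2]
    · rw [if_neg h]
      apply px_mul_px (hD_incl (k := k) (VA := VA) (VB := VB) (SA := SA) (SB := SB))
      intro hh
      obtain ⟨h1, h2⟩ := (TensQ.mk_injEq _ _ _ _).1 hh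
      exact h ⟨h1, h2.symm⟩
  rw [Finset.sum_congr rfl fun i _ => Finset.sum_congr rfl fun j _ => hterm i j]
  simp [ite_and, Finset.sum_ite_eq, Finset.sum_ite_eq']

end Sums

end Main
section Homs

variable {k} {VA} {VB} {SA} {SB}

/-- `e_a` in the quotient `A`. -/
noncomputable def EA (a : VA) : RingQuot (BoundRel k VA SA) :=
  RingQuot.mkAlgHom k (BoundRel k VA SA) (ι k (Sum.inl a))

noncomputable def XA (p : Σ a : VA, Σ b : VA, a ⟶ b) : RingQuot (BoundRel k VA SA) :=
  RingQuot.mkAlgHom k (BoundRel k VA SA) (ι k (Sum.inr p))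

noncomputable def EB (s : VB) : RingQuot (BoundRel k VB SB) :=
  RingQuot.mkAlgHom k (BoundRel k VB SB) (ι k (Sum.inl s))

noncomputable def XB (q : Σ s : VB, Σ t : VB, s ⟶ t) : RingQuot (BoundRel k VB SB) :=
  RingQuot.mkAlgHom k (BoundRel k VB SB) (ι k (Sum.inr q))

/-- The free-algebra-level map `kQ_A → k(Q_A ⊗ Q_B)/(I_A ◇ I_B)`. -/
noncomputable def PA : FreeAlgebra k (QGen VA) →ₐ[k] RingQuot (DiamondRel k VA VB SA SB) :=
  (RingQuot.mkAlgHom k (DiamondRel k VA VB SA SB)).comp (psiA k VA VB)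

noncomputable def PB : FreeAlgebra k (QGen VB) →ₐ[k] RingQuot (DiamondRel k VA VB SA SB) :=
  (RingQuot.mkAlgHom k (DiamondRel k VA VB SA SB)).comp (psiB k VA VB)

lemma PA_inl (a : VA) :
    (PA : FreeAlgebra k (QGen VA) →ₐ[k] RingQuot (DiamondRel k VA VB SA SB))
      (ι k (Sum.inl a)) = ∑ j : VB, ET (a, j) := by
  simp [PA, psiA, ET]

lemma PA_inr (p : Σ a : VA, Σ b : VA, a ⟶ b) :
    (PA : FreeAlgebra k (QGen VA) →ₐ[k] RingQuot (DiamondRel k VA VB SA SB))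
      (ι k (Sum.inr p)) = ∑ j : VB, XT (tArrL VA VB p j) := by
  simp [PA, psiA, XT]

lemma PB_inl (s : VB) :
    (PB : FreeAlgebra k (QGen VB) →ₐ[k] RingQuot (DiamondRel k VA VB SA SB))
      (ι k (Sum.inl s)) = ∑ i : VA, ET (i, s) := by
  simp [PB, psiB, ET]

lemma PB_inr (q : Σ s : VB, Σ t : VB, s ⟶ t) :
    (PB : FreeAlgebra k (QGen VB) →ₐ[k] RingQuot (DiamondRel k VA VB SA SB))
      (ι k (Sum.inr q)) = ∑ i : VA, XT (tArrR VA VB q i) := by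
  simp [PB, psiB, XT]

lemma PA_rel : ∀ ⦃x y⦄, BoundRel k VA SA x y →
    (PA : FreeAlgebra k (QGen VA) →ₐ[k] RingQuot (DiamondRel k VA VB SA SB)) x = PA y := by
  rintro x y (h | ⟨hx, rfl⟩)
  · induction h with
    | vertex a b =>
      rw [map_mul, PA_inl, PA_inl, La]
      by_cases hab : a = b <;> simp [hab, PA_inl]
    | vsum => simp [map_sum, PA_inl, Lb]
    | left p => rw [map_mul, PA_inl, PA_inr, Lc]
    | right p => rw [map_mul, PA_inr, PA_inl, Ld]
  · show (RingQuot.mkAlgHom k (DiamondRel k VA VB SA SB)) (psiA k VA VB x) = _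
    have hrel : DiamondRel k VA VB SA SB (psiA k VA VB x) 0 :=
      Or.inr (Or.inl ⟨x, hx, rfl, rfl⟩)
    rw [RingQuot.mkAlgHom_rel k hrel]
    simp [PA]

lemma PB_rel : ∀ ⦃x y⦄, BoundRel k VB SB x y →
    (PB : FreeAlgebra k (QGen VB) →ₐ[k] RingQuot (DiamondRel k VA VB SA SB)) x = PB y := by
  rintro x y (h | ⟨hx, rfl⟩)
  · induction h with
    | vertex a b =>
      rw [map_mul, PB_inl, PB_inl, La']
      by_cases hab : a = b <;> simp [hab, PB_inl]
    | vsum => simp [map_sum, PB_inl, Lb']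
    | left q => rw [map_mul, PB_inl, PB_inr, Lc']
    | right q => rw [map_mul, PB_inr, PB_inl, Ld']
  · show (RingQuot.mkAlgHom k (DiamondRel k VA VB SA SB)) (psiB k VA VB x) = _
    have hrel : DiamondRel k VA VB SA SB (psiB k VA VB x) 0 :=
      Or.inr (Or.inr (Or.inl ⟨x, hx, rfl, rfl⟩))
    rw [RingQuot.mkAlgHom_rel k hrel]
    simp [PB]

noncomputable def phiA :
    RingQuot (BoundRel k VA SA) →ₐ[k] RingQuot (DiamondRel k VA VB SA SB) :=
  RingQuot.liftAlgHom k ⟨PA, PA_rel⟩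

noncomputable def phiB :
    RingQuot (BoundRel k VB SB) →ₐ[k] RingQuot (DiamondRel k VA VB SA SB) :=
  RingQuot.liftAlgHom k ⟨PB, PB_rel⟩

lemma phiA_mk (x : FreeAlgebra k (QGen VA)) :
    (phiA : RingQuot (BoundRel k VA SA) →ₐ[k] RingQuot (DiamondRel k VA VB SA SB))
      (RingQuot.mkAlgHom k (BoundRel k VA SA) x) = PA x :=
  RingQuot.liftAlgHom_mkAlgHom_apply _ _ _ _

lemma phiB_mk (x : FreeAlgebra k (QGen VB)) :
    (phiB : RingQuot (BoundRel k VB SB) →ₐ[k] RingQuot (DiamondRel k VA VB SA SB))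
      (RingQuot.mkAlgHom k (BoundRel k VB SB) x) = PB x :=
  RingQuot.liftAlgHom_mkAlgHom_apply _ _ _ _

lemma XTcomm (p : Σ a : VA, Σ b : VA, a ⟶ b) (q : Σ s : VB, Σ t : VB, s ⟶ t) :
    (XT (tArrL VA VB p q.1) * XT (tArrR VA VB q p.2.1) :
      RingQuot (DiamondRel k VA VB SA SB)) =
    XT (tArrR VA VB q p.1) * XT (tArrL VA VB p q.2.1) := by
  have hrel : DiamondRel k VA VB SA SB
      (ι k (Sum.inr (tArrR VA VB q p.1)) * ι k (Sum.inr (tArrL VA VB p q.2.1)))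
      (ι k (Sum.inr (tArrL VA VB p q.1)) * ι k (Sum.inr (tArrR VA VB q p.2.1))) :=
    Or.inr (Or.inr (Or.inr ⟨p, q, rfl, rfl⟩))
  have h2 := RingQuot.mkAlgHom_rel (s := DiamondRel k VA VB SA SB) k hrel
  rw [map_mul, map_mul] at h2
  exact h2.symm

lemma PA_PB_commute (x : FreeAlgebra k (QGen VA)) (y : FreeAlgebra k (QGen VB)) :
    Commute ((PA : FreeAlgebra k (QGen VA) →ₐ[k] RingQuot (DiamondRel k VA VB SA SB)) x)
      (PB y) := by
  induction x using FreeAlgebra.induction with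
  | grade0 r => rw [AlgHom.commutes]; exact Algebra.commutes r _
  | add x₁ x₂ ih₁ ih₂ => rw [map_add]; exact ih₁.add_left ih₂
  | mul x₁ x₂ ih₁ ih₂ => rw [map_mul]; exact ih₁.mul_left ih₂
  | grade1 g =>
    induction y using FreeAlgebra.induction with
    | grade0 r => rw [AlgHom.commutes]; exact (Algebra.commutes r _).symm
    | add y₁ y₂ ih₁ ih₂ => rw [map_add]; exact ih₁.add_right ih₂
    | mul y₁ y₂ ih₁ ih₂ => rw [map_mul]; exact ih₁.mul_right ih₂
    | grade1 g' =>
      rw [commute_iff_eq]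
      cases g with
      | inl a =>
        cases g' with
        | inl s => rw [PA_inl, PB_inl, Le, Le']
        | inr q => rw [PA_inl, PB_inr, Lf, Lf']
      | inr p =>
        cases g' with
        | inl s => rw [PA_inr, PB_inl, Lg', Lg]
        | inr q => rw [PA_inr, PB_inr, Lh, Lh', XTcomm]

lemma phi_commute (x : RingQuot (BoundRel k VA SA)) (y : RingQuot (BoundRel k VB SB)) :
    Commute ((phiA : RingQuot (BoundRel k VA SA) →ₐ[k]
      RingQuot (DiamondRel k VA VB SA SB)) x) (phiB y) := by
  obtain ⟨x, rfl⟩ := RingQuot.mkAlgHom_surjective k _ x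
  obtain ⟨y, rfl⟩ := RingQuot.mkAlgHom_surjective k _ y
  rw [phiA_mk, phiB_mk]
  exact PA_PB_commute x y

/-- The forward map `A ⊗ B → k(Q_A ⊗ Q_B)/(I_A ◇ I_B)`. -/
noncomputable def Phi :
    (RingQuot (BoundRel k VA SA) ⊗[k] RingQuot (BoundRel k VB SB)) →ₐ[k]
      RingQuot (DiamondRel k VA VB SA SB) :=
  Algebra.TensorProduct.lift phiA phiB phi_commute

end Homs
section Inverse

variable {k} {VA} {VB} {SA} {SB}

/-- The free-algebra-level inverse map `k(Q_A ⊗ Q_B) → A ⊗ B`. -/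
noncomputable def PsiF : FreeAlgebra k (QGen (TensQ VA VB)) →ₐ[k]
    (RingQuot (BoundRel k VA SA) ⊗[k] RingQuot (BoundRel k VB SB)) :=
  FreeAlgebra.lift k fun g =>
    match g with
    | Sum.inl z => EA z.1 ⊗ₜ EB z.2
    | Sum.inr ⟨z, w, Sum.inl f⟩ => XA ⟨z.1, w.1, f.1⟩ ⊗ₜ EB z.2
    | Sum.inr ⟨z, w, Sum.inr g'⟩ => EA z.1 ⊗ₜ XB ⟨z.2, w.2, g'.1⟩

lemma psiF_inl (z : TensQ VA VB) :
    (PsiF : FreeAlgebra k (QGen (TensQ VA VB)) →ₐ[k]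
      (RingQuot (BoundRel k VA SA) ⊗[k] RingQuot (BoundRel k VB SB)))
      (ι k (Sum.inl z)) = EA z.1 ⊗ₜ EB z.2 := by
  simp [PsiF]

lemma psiF_inl' (a : VA) (j : VB) :
    (PsiF : FreeAlgebra k (QGen (TensQ VA VB)) →ₐ[k]
      (RingQuot (BoundRel k VA SA) ⊗[k] RingQuot (BoundRel k VB SB)))
      (ι k (Sum.inl ((a, j) : TensQ VA VB))) = EA a ⊗ₜ EB j :=
  psiF_inl _

lemma psiF_arrL (z w : TensQ VA VB) (f : z.1 ⟶ w.1) (h : z.2 = w.2) :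
    (PsiF : FreeAlgebra k (QGen (TensQ VA VB)) →ₐ[k]
      (RingQuot (BoundRel k VA SA) ⊗[k] RingQuot (BoundRel k VB SB)))
      (ι k (Sum.inr ⟨z, w, Sum.inl ⟨f, h⟩⟩)) = XA ⟨z.1, w.1, f⟩ ⊗ₜ EB z.2 := by
  simp [PsiF]

lemma psiF_arrR (z w : TensQ VA VB) (g : z.2 ⟶ w.2) (h : z.1 = w.1) :
    (PsiF : FreeAlgebra k (QGen (TensQ VA VB)) →ₐ[k]
      (RingQuot (BoundRel k VA SA) ⊗[k] RingQuot (BoundRel k VB SB)))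
      (ι k (Sum.inr ⟨z, w, Sum.inr ⟨g, h⟩⟩)) = EA z.1 ⊗ₜ XB ⟨z.2, w.2, g⟩ := by
  simp [PsiF]

lemma psiF_tArrL (p : Σ a : VA, Σ b : VA, a ⟶ b) (j : VB) :
    (PsiF : FreeAlgebra k (QGen (TensQ VA VB)) →ₐ[k]
      (RingQuot (BoundRel k VA SA) ⊗[k] RingQuot (BoundRel k VB SB)))
      (ι k (Sum.inr (tArrL VA VB p j))) = XA p ⊗ₜ EB j := by
  obtain ⟨a, b, f⟩ := p
  exact psiF_arrL (a, j) (b, j) f rfl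

lemma psiF_tArrR (q : Σ s : VB, Σ t : VB, s ⟶ t) (i : VA) :
    (PsiF : FreeAlgebra k (QGen (TensQ VA VB)) →ₐ[k]
      (RingQuot (BoundRel k VA SA) ⊗[k] RingQuot (BoundRel k VB SB)))
      (ι k (Sum.inr (tArrR VA VB q i))) = EA i ⊗ₜ XB q := by
  obtain ⟨s, t, g⟩ := q
  exact psiF_arrR (i, s) (i, t) g rfl

lemma psiF_psiA : (PsiF : FreeAlgebra k (QGen (TensQ VA VB)) →ₐ[k]
      (RingQuot (BoundRel k VA SA) ⊗[k] RingQuot (BoundRel k VB SB))).comp (psiA k VA VB) =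
    (Algebra.TensorProduct.includeLeft).comp (RingQuot.mkAlgHom k (BoundRel k VA SA)) := by
  apply FreeAlgebra.hom_ext
  funext g
  cases g with
  | inl a =>
    simp [psiA, map_sum, psiF_inl, psiF_inl', ← TensorProduct.tmul_sum,
      pe_sum (hB_incl (k := k) (VB := VB) (SB := SB)), EA, EB]
  | inr p =>
    simp [psiA, map_sum, psiF_tArrL, ← TensorProduct.tmul_sum,
      pe_sum (hB_incl (k := k) (VB := VB) (SB := SB)), XA, EB]

lemma psiF_psiB : (PsiF : FreeAlgebra k (QGen (TensQ VA VB)) →ₐ[k]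
      (RingQuot (BoundRel k VA SA) ⊗[k] RingQuot (BoundRel k VB SB))).comp (psiB k VA VB) =
    (Algebra.TensorProduct.includeRight).comp (RingQuot.mkAlgHom k (BoundRel k VB SB)) := by
  apply FreeAlgebra.hom_ext
  funext g
  cases g with
  | inl s =>
    simp [psiB, map_sum, psiF_inl, psiF_inl', ← TensorProduct.sum_tmul,
      pe_sum (hA_incl (k := k) (VA := VA) (SA := SA)), EA, EB]
  | inr q =>
    simp [psiB, map_sum, psiF_tArrR, ← TensorProduct.sum_tmul,
      pe_sum (hA_incl (k := k) (VA := VA) (SA := SA)), EA, XB]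

lemma PsiF_rel : ∀ ⦃x y⦄, DiamondRel k VA VB SA SB x y →
    (PsiF : FreeAlgebra k (QGen (TensQ VA VB)) →ₐ[k]
      (RingQuot (BoundRel k VA SA) ⊗[k] RingQuot (BoundRel k VB SB))) x = PsiF y := by
  rintro x y (h | ⟨s, hs, rfl, rfl⟩ | ⟨s, hs, rfl, rfl⟩ | ⟨p, q, rfl, rfl⟩)
  · induction h with
    | vertex z w =>
      obtain ⟨z1, z2⟩ := z
      obtain ⟨w1, w2⟩ := w
      erw [map_mul, psiF_inl, psiF_inl, Algebra.TensorProduct.tmul_mul_tmul]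
      by_cases h1 : z1 = w1 <;> by_cases h2 : z2 = w2 <;>
        simp [EA, EB, pe_mul_pe (hA_incl (k := k) (VA := VA) (SA := SA)), pe_mul_pe (hB_incl (k := k) (VB := VB) (SB := SB)), h1, h2, apply_ite,
          TensQ.mk_injEq, psiF_inl, psiF_inl']
    | vsum =>
      rw [map_sum, map_one]
      simp only [psiF_inl]
      rw [show (∑ z : TensQ VA VB, (EA z.1 ⊗ₜ[k] EB z.2 :
            RingQuot (BoundRel k VA SA) ⊗[k] RingQuot (BoundRel k VB SB))) =
          ∑ a : VA, ∑ j : VB, EA a ⊗ₜ[k] EB j from Fintype.sum_prod_type _]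
      simp [← TensorProduct.tmul_sum, ← TensorProduct.sum_tmul, pe_sum (hA_incl (k := k) (VA := VA) (SA := SA)),
        pe_sum (hB_incl (k := k) (VB := VB) (SB := SB)), Algebra.TensorProduct.one_def, EA, EB]
    | left p =>
      obtain ⟨z, w, f⟩ := p
      obtain ⟨z1, z2⟩ := z
      obtain ⟨w1, w2⟩ := w
      rcases f with ⟨f, hf⟩ | ⟨g', hg⟩
      · cases hf
        erw [map_mul, psiF_inl, psiF_arrL, Algebra.TensorProduct.tmul_mul_tmul]
        simp [EA, EB, XA, pe_mul_px_src (hA_incl (k := k) (VA := VA) (SA := SA)) ⟨z1, w1, f⟩, pe_mul_pe (hB_incl (k := k) (VB := VB) (SB := SB))]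
      · cases hg
        erw [map_mul, psiF_inl, psiF_arrR, Algebra.TensorProduct.tmul_mul_tmul]
        simp [EA, EB, XB, pe_mul_px_src (hB_incl (k := k) (VB := VB) (SB := SB)) ⟨z2, w2, g'⟩, pe_mul_pe (hA_incl (k := k) (VA := VA) (SA := SA))]
    | right p =>
      obtain ⟨z, w, f⟩ := p
      obtain ⟨z1, z2⟩ := z
      obtain ⟨w1, w2⟩ := w
      rcases f with ⟨f, hf⟩ | ⟨g', hg⟩
      · cases hf
        erw [map_mul, psiF_inl, psiF_arrL, Algebra.TensorProduct.tmul_mul_tmul]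
        simp [EA, EB, XA, px_mul_pe_tgt (hA_incl (k := k) (VA := VA) (SA := SA)) ⟨z1, w1, f⟩, pe_mul_pe (hB_incl (k := k) (VB := VB) (SB := SB))]
      · cases hg
        erw [map_mul, psiF_inl, psiF_arrR, Algebra.TensorProduct.tmul_mul_tmul]
        simp [EA, EB, XB, px_mul_pe_tgt (hB_incl (k := k) (VB := VB) (SB := SB)) ⟨z2, w2, g'⟩, pe_mul_pe (hA_incl (k := k) (VA := VA) (SA := SA))]
  · have h1 := AlgHom.congr_fun (psiF_psiA (k := k) (VA := VA) (VB := VB) (SA := SA) (SB := SB)) s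
    simp only [AlgHom.coe_comp, Function.comp_apply] at h1
    rw [h1, RingQuot.mkAlgHom_rel (s := BoundRel k VA SA) k (Or.inr ⟨hs, rfl⟩)]
    simp
  · have h1 := AlgHom.congr_fun (psiF_psiB (k := k) (VA := VA) (VB := VB) (SA := SA) (SB := SB)) s
    simp only [AlgHom.coe_comp, Function.comp_apply] at h1
    rw [h1, RingQuot.mkAlgHom_rel (s := BoundRel k VB SB) k (Or.inr ⟨hs, rfl⟩)]
    simp
  · rw [map_mul, map_mul, psiF_tArrR, psiF_tArrL, psiF_tArrL, psiF_tArrR,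
      Algebra.TensorProduct.tmul_mul_tmul, Algebra.TensorProduct.tmul_mul_tmul]
    rw [show (EA p.1 * XA p : RingQuot (BoundRel k VA SA)) = XA p from
        pe_mul_px_src (hA_incl (k := k) (VA := VA) (SA := SA)) p,
      show (XB q * EB q.2.1 : RingQuot (BoundRel k VB SB)) = XB q from
        px_mul_pe_tgt (hB_incl (k := k) (VB := VB) (SB := SB)) q,
      show (XA p * EA p.2.1 : RingQuot (BoundRel k VA SA)) = XA p from
        px_mul_pe_tgt (hA_incl (k := k) (VA := VA) (SA := SA)) p,
      show (EB q.1 * XB q : RingQuot (BoundRel k VB SB)) = XB q from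
        pe_mul_px_src (hB_incl (k := k) (VB := VB) (SB := SB)) q]

/-- The inverse map on the quotient. -/
noncomputable def Psi : RingQuot (DiamondRel k VA VB SA SB) →ₐ[k]
    (RingQuot (BoundRel k VA SA) ⊗[k] RingQuot (BoundRel k VB SB)) :=
  RingQuot.liftAlgHom k ⟨PsiF, PsiF_rel⟩

lemma Psi_mk (x : FreeAlgebra k (QGen (TensQ VA VB))) :
    (Psi : RingQuot (DiamondRel k VA VB SA SB) →ₐ[k]
      (RingQuot (BoundRel k VA SA) ⊗[k] RingQuot (BoundRel k VB SB)))
      (RingQuot.mkAlgHom k (DiamondRel k VA VB SA SB) x) = PsiF x :=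
  RingQuot.liftAlgHom_mkAlgHom_apply _ _ _ _

lemma Phi_comp_Psi :
    (Phi.comp Psi : RingQuot (DiamondRel k VA VB SA SB) →ₐ[k]
        RingQuot (DiamondRel k VA VB SA SB)) =
      AlgHom.id k (RingQuot (DiamondRel k VA VB SA SB)) := by
  apply RingQuot.ringQuot_ext'
  apply FreeAlgebra.hom_ext
  funext g
  simp only [AlgHom.coe_comp, Function.comp_apply, AlgHom.coe_id, id_eq]
  rw [Psi_mk]
  cases g with
  | inl z =>
    obtain ⟨a, j⟩ := z
    erw [psiF_inl]
    simp only [Phi, Algebra.TensorProduct.lift_tmul]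
    rw [show (EA a : RingQuot (BoundRel k VA SA)) =
        RingQuot.mkAlgHom k (BoundRel k VA SA) (ι k (Sum.inl a)) from rfl,
      show (EB j : RingQuot (BoundRel k VB SB)) =
        RingQuot.mkAlgHom k (BoundRel k VB SB) (ι k (Sum.inl j)) from rfl,
      phiA_mk, phiB_mk, PA_inl, PB_inl, Le]
    rfl
  | inr p =>
    obtain ⟨z, w, f⟩ := p
    obtain ⟨z1, z2⟩ := z
    obtain ⟨w1, w2⟩ := w
    rcases f with ⟨f, hf⟩ | ⟨g', hg⟩
    · cases hf
      erw [psiF_arrL]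
      simp only [Phi, Algebra.TensorProduct.lift_tmul]
      rw [show (XA ⟨z1, w1, f⟩ : RingQuot (BoundRel k VA SA)) =
          RingQuot.mkAlgHom k (BoundRel k VA SA) (ι k (Sum.inr ⟨z1, w1, f⟩)) from rfl,
        show (EB z2 : RingQuot (BoundRel k VB SB)) =
          RingQuot.mkAlgHom k (BoundRel k VB SB) (ι k (Sum.inl z2)) from rfl,
        phiA_mk, phiB_mk, PA_inr, PB_inl, Lg']
      rfl
    · cases hg
      erw [psiF_arrR]
      simp only [Phi, Algebra.TensorProduct.lift_tmul]
      rw [show (EA z1 : RingQuot (BoundRel k VA SA)) =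
          RingQuot.mkAlgHom k (BoundRel k VA SA) (ι k (Sum.inl z1)) from rfl,
        show (XB ⟨z2, w2, g'⟩ : RingQuot (BoundRel k VB SB)) =
          RingQuot.mkAlgHom k (BoundRel k VB SB) (ι k (Sum.inr ⟨z2, w2, g'⟩)) from rfl,
        phiA_mk, phiB_mk, PA_inl, PB_inr, Lf]
      rfl

lemma sum_EA : ∑ a : VA, (EA a : RingQuot (BoundRel k VA SA)) = 1 := pe_sum (hA_incl (k := k) (VA := VA) (SA := SA))

lemma sum_EB : ∑ s : VB, (EB s : RingQuot (BoundRel k VB SB)) = 1 := pe_sum (hB_incl (k := k) (VB := VB) (SB := SB))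

lemma Psi_comp_Phi :
    (Psi.comp Phi : (RingQuot (BoundRel k VA SA) ⊗[k] RingQuot (BoundRel k VB SB)) →ₐ[k]
        (RingQuot (BoundRel k VA SA) ⊗[k] RingQuot (BoundRel k VB SB))) =
      AlgHom.id k _ := by
  apply Algebra.TensorProduct.ext
  · apply RingQuot.ringQuot_ext'
    apply FreeAlgebra.hom_ext
    funext g
    simp only [AlgHom.coe_comp, Function.comp_apply, AlgHom.coe_id, id_eq,
      Algebra.TensorProduct.includeLeft_apply, Phi, Algebra.TensorProduct.lift_tmul,
      map_one, mul_one, phiA_mk]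
    cases g with
    | inl a =>
      rw [PA_inl, map_sum]
      have hj : ∀ j : VB, (Psi : RingQuot (DiamondRel k VA VB SA SB) →ₐ[k] _)
          (ET (a, j)) = EA a ⊗ₜ[k] EB j := fun j => by
        rw [show (ET (a, j) : RingQuot (DiamondRel k VA VB SA SB)) =
          RingQuot.mkAlgHom k (DiamondRel k VA VB SA SB) (ι k (Sum.inl (a, j))) from rfl,
          Psi_mk, psiF_inl']
      rw [Finset.sum_congr rfl fun j _ => hj j, ← TensorProduct.tmul_sum, sum_EB]
      rfl
    | inr p =>
      rw [PA_inr, map_sum]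
      have hj : ∀ j : VB, (Psi : RingQuot (DiamondRel k VA VB SA SB) →ₐ[k] _)
          (XT (tArrL VA VB p j)) = XA p ⊗ₜ[k] EB j := fun j => by
        rw [show (XT (tArrL VA VB p j) : RingQuot (DiamondRel k VA VB SA SB)) =
          RingQuot.mkAlgHom k (DiamondRel k VA VB SA SB)
            (ι k (Sum.inr (tArrL VA VB p j))) from rfl,
          Psi_mk, psiF_tArrL]
      rw [Finset.sum_congr rfl fun j _ => hj j, ← TensorProduct.tmul_sum, sum_EB]
      rfl
  · apply RingQuot.ringQuot_ext'
    apply FreeAlgebra.hom_ext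
    funext g
    simp only [AlgHom.coe_comp, AlgHom.coe_restrictScalars', Function.comp_apply,
      AlgHom.coe_id, id_eq, Algebra.TensorProduct.includeRight_apply, Phi,
      Algebra.TensorProduct.lift_tmul, map_one, one_mul, phiB_mk]
    cases g with
    | inl s =>
      rw [PB_inl, map_sum]
      have hi : ∀ i : VA, (Psi : RingQuot (DiamondRel k VA VB SA SB) →ₐ[k] _)
          (ET (i, s)) = EA i ⊗ₜ[k] EB s := fun i => by
        rw [show (ET (i, s) : RingQuot (DiamondRel k VA VB SA SB)) =
          RingQuot.mkAlgHom k (DiamondRel k VA VB SA SB) (ι k (Sum.inl (i, s))) from rfl,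
          Psi_mk, psiF_inl']
      rw [Finset.sum_congr rfl fun i _ => hi i, ← TensorProduct.sum_tmul, sum_EA]
      rfl
    | inr q =>
      rw [PB_inr, map_sum]
      have hi : ∀ i : VA, (Psi : RingQuot (DiamondRel k VA VB SA SB) →ₐ[k] _)
          (XT (tArrR VA VB q i)) = EA i ⊗ₜ[k] XB q := fun i => by
        rw [show (XT (tArrR VA VB q i) : RingQuot (DiamondRel k VA VB SA SB)) =
          RingQuot.mkAlgHom k (DiamondRel k VA VB SA SB)
            (ι k (Sum.inr (tArrR VA VB q i))) from rfl,
          Psi_mk, psiF_tArrR]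
      rw [Finset.sum_congr rfl fun i _ => hi i, ← TensorProduct.sum_tmul, sum_EA]
      rfl

end Inverse
/-- for bound quiver algebras `A = kQ_A/I_A` and `B = kQ_B/I_B` (with `I_A`,
`I_B` admissible ideals generated by sets of relations `S_A`, `S_B`), the tensor product
`A ⊗[k] B` is isomorphic to the bound quiver algebra `k(Q_A ⊗ Q_B)/(I_A ◇ I_B)`. -/
theorem stmt_13 (hA : Admissible k VA SA) (hB : Admissible k VB SB) :
    Nonempty ((RingQuot (BoundRel k VA SA) ⊗[k] RingQuot (BoundRel k VB SB)) ≃ₐ[k]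
      RingQuot (DiamondRel k VA VB SA SB)) := by
  exact ⟨AlgEquiv.ofAlgHom Phi Psi Phi_comp_Psi Psi_comp_Phi⟩

end
end
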